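/- arXiv:2510.19104 — 2 statements merged into one kernel-verified Lean document; each statement's English description precedes it below -/
import Mathlib

section
/- For fixed m ≥ 0 and 0 ≤ k ≤ m, the prism cell S_k = { (u,t) ∈ |Δ^m| × [0,1] : Σ_{i>k} u_i ≤ t ≤ u_k + Σ_{i>k} u_i } equals the convex hull of the points (e_0,0),…,(e_k,0),(e_k,1),…,(e_m,1), where e_i are the vertices of the geometric m-simplex. -/
/-!
The cell `S_k` is convex and contains the listed vertices, which gives `⊇`. Conversely, with
`s = ∑_{i>k} u_i`, a point `(u,t) ∈ S_k` is the convex combination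
`∑_{i<k} u_i (e_i,0) + (u_k + s - t) (e_k,0) + (t - s) (e_k,1) + ∑_{i>k} u_i (e_i,1)`:
the two inequalities defining `S_k` say exactly that the two middle weights are nonnegative.
-/

open Finset

/-- The prism cell `S_k ⊆ |Δ^m| × [0,1]`. -/
def prismCell (m : ℕ) (k : Fin (m + 1)) : Set ((Fin (m + 1) → ℝ) × ℝ) :=
  {x | x.1 ∈ stdSimplex ℝ (Fin (m + 1)) ∧
    (∑ i ∈ Finset.univ.filter (fun i => k < i), x.1 i) ≤ x.2 ∧
    x.2 ≤ x.1 k + ∑ i ∈ Finset.univ.filter (fun i => k < i), x.1 i}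

section
variable {R E ι : Type*} [Field R] [LinearOrder R] [IsStrictOrderedRing R] [AddCommGroup E]
  [Module R E] [Fintype ι]

theorem sum_smul_mem_convexHull {s : Set E} {w : ι → R} {z : ι → E} (h₀ : ∀ i, 0 ≤ w i)
    (h₁ : ∑ i, w i = 1) (hz : ∀ i, w i ≠ 0 → z i ∈ s) : ∑ i, w i • z i ∈ convexHull R s := by
  rw [← finsum_eq_sum_of_fintype]
  exact (convex_convexHull R s).finsum_mem h₀ (by rwa [finsum_eq_sum_of_fintype])
    fun i hi => subset_convexHull R s (hz i hi)

theorem sum_smul_add_sum_smul_mem_convexHull_union {f g : ι → E} {A B : Set ι} {a b : ι → R}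
    (ha : ∀ i, 0 ≤ a i) (hb : ∀ i, 0 ≤ b i) (hab : ∑ i, a i + ∑ i, b i = 1)
    (haA : ∀ i, a i ≠ 0 → i ∈ A) (hbB : ∀ i, b i ≠ 0 → i ∈ B) :
    ∑ i, a i • f i + ∑ i, b i • g i ∈ convexHull R (f '' A ∪ g '' B) := by
  have := sum_smul_mem_convexHull (s := f '' A ∪ g '' B) (w := Sum.elim a b) (z := Sum.elim f g)
    (by rintro (i | i); exacts [ha i, hb i]) (by rwa [Fintype.sum_sum_type])
    (by rintro (i | i) hi
        exacts [Or.inl (Set.mem_image_of_mem f (haA i hi)),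
          Or.inr (Set.mem_image_of_mem g (hbB i hi))])
  rwa [Fintype.sum_sum_type] at this

end

section
variable {R ι : Type*} [CommSemiring R] [Fintype ι] [DecidableEq ι]

theorem sum_smul_single_one_prod (c : ι → R) (r : R) :
    ∑ i, c i • ((Pi.single i 1 : ι → R), r) = (c, (∑ i, c i) * r) := by
  ext <;> simp [Prod.fst_sum, Prod.snd_sum, Finset.sum_apply, Pi.single_apply, sum_mul]

end

theorem convex_prismCell (m : ℕ) (k : Fin (m + 1)) : Convex ℝ (prismCell m k) := by
  rintro x ⟨hx, hx₁, hx₂⟩ y ⟨hy, hy₁, hy₂⟩ a b ha hb hab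
  refine ⟨convex_stdSimplex ℝ _ hx hy ha hb hab, ?_, ?_⟩ <;>
  · simp only [Prod.fst_add, Prod.snd_add, Prod.smul_fst, Prod.smul_snd, Pi.add_apply,
      Pi.smul_apply, smul_eq_mul, sum_add_distrib, ← mul_sum]
    linarith [mul_le_mul_of_nonneg_left hx₁ ha, mul_le_mul_of_nonneg_left hy₁ hb,
      mul_le_mul_of_nonneg_left hx₂ ha, mul_le_mul_of_nonneg_left hy₂ hb]

def prismVertices (m : ℕ) (k : Fin (m + 1)) : Set ((Fin (m + 1) → ℝ) × ℝ) :=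
  ((fun i : Fin (m + 1) => ((Pi.single i (1 : ℝ) : Fin (m + 1) → ℝ), (0 : ℝ))) '' {i | i ≤ k}) ∪
    ((fun i : Fin (m + 1) => ((Pi.single i (1 : ℝ) : Fin (m + 1) → ℝ), (1 : ℝ))) '' {i | k ≤ i})

theorem prismVertices_subset_prismCell (m : ℕ) (k : Fin (m + 1)) :
    prismVertices m k ⊆ prismCell m k := by
  rintro _ (⟨i, hi : i ≤ k, rfl⟩ | ⟨i, hi : k ≤ i, rfl⟩) <;>
    refine ⟨single_mem_stdSimplex ℝ i, ?_, ?_⟩ <;> simp only [sum_pi_single', mem_filter, mem_univ, true_and]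
  · simp [hi.not_gt]
  · simpa [hi.not_gt] using (single_mem_stdSimplex ℝ i).1 k
  · split_ifs <;> norm_num
  · rcases hi.lt_or_eq with hki | rfl
    · simp [hki, hki.ne]
    · simp

theorem prismCell_subset_convexHull (m : ℕ) (k : Fin (m + 1)) :
    prismCell m k ⊆ convexHull ℝ (prismVertices m k) := by
  rintro ⟨u, t⟩ ⟨hu, hst, hts⟩
  dsimp only at hst hts
  set s := ∑ i ∈ univ.filter (fun i => k < i), u i
  let a : Fin (m + 1) → ℝ := fun i => if i < k then u i else if i = k then u k + s - t else 0
  let b : Fin (m + 1) → ℝ := fun i => if k < i then u i else if i = k then t - s else 0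
  have hab : a + b = u := by
    ext i
    rcases lt_trichotomy i k with h | rfl | h
    · simp [a, b, h, h.ne, h.not_gt]
    · simp [a, b]
    · simp [a, b, h, h.ne', h.not_gt]
  have hb : ∑ i, b i = t := by simp [b, sum_ite, s]
  have hmem := sum_smul_add_sum_smul_mem_convexHull_union (a := a) (b := b)
    (f := fun i => ((Pi.single i (1 : ℝ) : Fin (m + 1) → ℝ), (0 : ℝ)))
    (g := fun i => ((Pi.single i (1 : ℝ) : Fin (m + 1) → ℝ), (1 : ℝ)))
    (A := {i | i ≤ k}) (B := {i | k ≤ i}) ?_ ?_ ?_ ?_ ?_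
  · rwa [sum_smul_single_one_prod, sum_smul_single_one_prod, hb, Prod.mk_add_mk, hab,
      mul_zero, mul_one, zero_add] at hmem
  · intro i
    dsimp only [a]
    split_ifs <;> linarith [hu.1 i]
  · intro i
    dsimp only [b]
    split_ifs <;> linarith [hu.1 i]
  · rw [← sum_add_distrib, ← hu.2]
    exact sum_congr rfl fun i _ => congrFun hab i
  · intro i hi
    dsimp only [a] at hi
    split_ifs at hi with hik hik'
    exacts [hik.le, hik'.le, (hi rfl).elim]
  · intro i hi
    dsimp only [b] at hi
    split_ifs at hi with hki hki'
    exacts [hki.le, hki'.ge, (hi rfl).elim]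

/-- The prism cell `S_k` equals the convex hull of the vertices
`(e_0,0), …, (e_k,0), (e_k,1), …, (e_m,1)`. -/
theorem prismCell_eq_convexHull (m : ℕ) (k : Fin (m + 1)) :
    prismCell m k =
      convexHull ℝ
        (((fun i : Fin (m + 1) => ((Pi.single i (1 : ℝ) : Fin (m + 1) → ℝ), (0 : ℝ))) ''
            {i | i ≤ k}) ∪
          ((fun i : Fin (m + 1) => ((Pi.single i (1 : ℝ) : Fin (m + 1) → ℝ), (1 : ℝ))) ''
            {i | k ≤ i})) :=
  (prismCell_subset_convexHull m k).antisymm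
    (convexHull_min (prismVertices_subset_prismCell m k) (convex_prismCell m k))
end

section
/- With α : [m] → [n] monotone and β the step map with index k, the realized formula for α ⊡ β agrees with the straight-line contraction composed with |α|: for u ∈ |Δ^m| and s = Σ_{i>k} u_i, the vector v with v_j = Σ_{i>k, α(i)=j} u_i (j ≥ 1), v_0 = (1−s) + Σ_{i>k, α(i)=0} u_i satisfies v = C(|α|(u'), s) where u' is the renormalization of (u_i)_{i>k} when s > 0 — equivalently, t·(|α|(u))_j differs from v_j by a term supported on indices i ≤ k; in particular if β = c₁ (k = −1, s = 1) then v = |α|(u), and if β = c₀ (k = m, s = 0) then v = e_0. -/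
open Finset

/-- The Hadamard product `i ↦ α(i)·β(i)` of `α : [m] → [n]` with `β : [m] → [1]`,
landing in `[n]` since `n·1 = n`. -/
def hadamardStep {m n : ℕ} (α : Fin (m + 1) →o Fin (n + 1)) (β : Fin (m + 1) →o Fin 2) :
    Fin (m + 1) → Fin (n + 1) := fun i =>
  ⟨(α i : ℕ) * (β i : ℕ),
    Nat.lt_succ_of_le (le_trans
      (Nat.mul_le_mul (Nat.lt_succ_iff.mp (α i).isLt) (Nat.lt_succ_iff.mp (β i).isLt))
      (le_of_eq (Nat.mul_one n)))⟩

section hadamardStep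

variable {m n : ℕ} (α : Fin (m + 1) →o Fin (n + 1)) (β : Fin (m + 1) →o Fin 2)
  {i : Fin (m + 1)}

theorem hadamardStep_of_eq_zero (h : β i = 0) : hadamardStep α β i = 0 :=
  Fin.ext (by simp [hadamardStep, h])

theorem hadamardStep_of_eq_one (h : β i = 1) : hadamardStep α β i = α i :=
  Fin.ext (by simp [hadamardStep, h])

theorem hadamardStep_eq_iff_of_ne_zero {j : Fin (n + 1)} (hj : j ≠ 0) :
    hadamardStep α β i = j ↔ α i = j ∧ ¬β i = 0 := by
  rcases Fin.exists_fin_two.mp ⟨β i, rfl⟩ with h | h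
  · simp [hadamardStep_of_eq_zero α β h, hj.symm, h]
  · simp [hadamardStep_of_eq_one α β h, h]

end hadamardStep

theorem Finset.sum_filter_and_not_eq_sub {ι M : Type*} [AddCommGroup M] (s : Finset ι)
    (p q : ι → Prop) [DecidablePred p] [DecidablePred q] (f : ι → M) :
    ∑ i ∈ s.filter (fun i => p i ∧ ¬q i), f i =
      ∑ i ∈ s.filter p, f i - ∑ i ∈ s.filter (fun i => q i ∧ p i), f i := by
  rw [eq_sub_iff_add_eq, add_comm, ← sum_filter_add_sum_filter_not (s.filter p) q,
    filter_filter, filter_filter]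
  simp only [and_comm]

theorem Finset.sum_fiber_const {ι κ M : Type*} [DecidableEq κ] [AddCommMonoid M]
    (s : Finset ι) (c : κ) (f : ι → M) :
    (fun j => ∑ i ∈ s.filter (fun _ => c = j), f i) = Pi.single c (∑ i ∈ s, f i) := by
  ext j
  obtain rfl | hj := eq_or_ne j c
  · simp
  · simp [hj, hj.symm]

/-- The realized Hadamard homotopy agrees with the straight-line contraction composed
with `|α|`: writing `v_j = Σ_{(α⊡β)(i)=j} u_i` and `|α|(u)_j = Σ_{α(i)=j} u_i`, for
`j ≠ 0` the value `v_j` differs from `|α|(u)_j` by the term supported on the indices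
where `β = 0`; in particular if `β = c₁` then `v = |α|(u)`, and if `β = c₀` then
`v = e_0`. -/
theorem realized_hadamard_is_contraction {m n : ℕ} (α : Fin (m + 1) →o Fin (n + 1))
    (β : Fin (m + 1) →o Fin 2) (u : Fin (m + 1) → ℝ)
    (hu : u ∈ stdSimplex ℝ (Fin (m + 1))) :
    (∀ j : Fin (n + 1), j ≠ 0 →
      (∑ i ∈ Finset.univ.filter (fun i => hadamardStep α β i = j), u i) =
        (∑ i ∈ Finset.univ.filter (fun i => α i = j), u i) -
          ∑ i ∈ Finset.univ.filter (fun i => β i = 0 ∧ α i = j), u i) ∧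
    ((∀ i, β i = 1) → ∀ j : Fin (n + 1),
      (∑ i ∈ Finset.univ.filter (fun i => hadamardStep α β i = j), u i) =
        ∑ i ∈ Finset.univ.filter (fun i => α i = j), u i) ∧
    ((∀ i, β i = 0) →
      (fun j => ∑ i ∈ Finset.univ.filter (fun i => hadamardStep α β i = j), u i) =
        (Pi.single 0 1 : Fin (n + 1) → ℝ)) := by
  refine ⟨fun j hj => ?_, fun hβ j => ?_, fun hβ => ?_⟩
  · simp only [hadamardStep_eq_iff_of_ne_zero α β hj]
    exact sum_filter_and_not_eq_sub _ _ _ u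
  · simp only [hadamardStep_of_eq_one α β (hβ _)]
  · simp only [hadamardStep_of_eq_zero α β (hβ _)]
    rw [sum_fiber_const, hu.2]
end
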